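/- arXiv:2404.08272 — 2 statements merged into one kernel-verified Lean document; each statement's English description precedes it below -/
import Mathlib

section
/- (Coercivity on finite graphs) Under hypotheses (A) and (H₁), the energy functional φ_V(u,v) = (1/p)‖u‖_{W^{m₁,p}(V)}^p + (1/q)‖v‖_{W^{m₂,q}(V)}^q − ∫_V F(x,u,v)dμ is coercive on X = W^{m₁,p}(V) × W^{m₂,q}(V), i.e. φ_V(u,v) → +∞ as ‖u‖_{W^{m₁,p}} + ‖v‖_{W^{m₂,q}} → ∞. -/
/-!
Integrating the growth conditions of (H₁) along the two coordinate axes, and absorbing the mixed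
term `|s| |t|^((pq-q)/p)` by Young's inequality, gives
`F(x,s,t) ≤ F(x,0,0) + a |s|^p + b |t|^q` with `a = (‖f₁‖_∞ + ‖f₂‖_∞)/p` and
`b = (((pq-q)/p) ‖f₂‖_∞ + ‖f₄‖_∞)/q`. Since `∫_V |u|^p dμ ≤ K_p^p ‖u‖^p`, this yields
`φ_V(u,v) ≥ ε (‖u‖^p + ‖v‖^q) - C` with `ε = min (1/p - a K_p^p) (1/q - b K_q^q)`, which is
positive exactly by (H₁). Finally `‖u‖ + ‖v‖ ≤ 2 + ‖u‖^p + ‖v‖^q` because `p, q ≥ 1`.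
-/

open Finset

/-- The graph Laplacian on a weighted finite graph. -/
noncomputable def graphLap {V : Type*} [Fintype V] (μ : V → ℝ) (E : V → V → Prop)
    [DecidableRel E] (w : V → V → ℝ) (u : V → ℝ) : V → ℝ :=
  fun x => (1 / μ x) * ∑ y, if E x y then w x y * (u y - u x) else 0

/-- The gradient length. -/
noncomputable def gradLen {V : Type*} [Fintype V] (μ : V → ℝ) (E : V → V → Prop)
    [DecidableRel E] (w : V → V → ℝ) (ψ : V → ℝ) : V → ℝ :=
  fun x => Real.sqrt ((1 / (2 * μ x)) * ∑ y, if E x y then w x y * (ψ y - ψ x) ^ 2 else 0)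

/-- The length of the m-th order gradient. -/
noncomputable def gradLenM {V : Type*} [Fintype V] (μ : V → ℝ) (E : V → V → Prop)
    [DecidableRel E] (w : V → V → ℝ) (m : ℕ) (ψ : V → ℝ) : V → ℝ :=
  if m % 2 = 1 then gradLen μ E w ((graphLap μ E w)^[(m - 1) / 2] ψ)
  else fun x => |(graphLap μ E w)^[m / 2] ψ x|

/-- The Sobolev norm `‖u‖_{W^{m,l}(V)} = (∫_V (|∇^m u|^l + h|u|^l) dμ)^{1/l}`. -/
noncomputable def sobNorm {V : Type*} [Fintype V] (μ : V → ℝ) (E : V → V → Prop)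
    [DecidableRel E] (w : V → V → ℝ) (m : ℕ) (l : ℝ) (h : V → ℝ) (u : V → ℝ) : ℝ :=
  (∑ x, μ x * ((gradLenM μ E w m u x) ^ l + h x * |u x| ^ l)) ^ (1 / l)

theorem gradLenM_nonneg {V : Type*} [Fintype V] (μ : V → ℝ) (E : V → V → Prop)
    [DecidableRel E] (w : V → V → ℝ) (m : ℕ) (ψ : V → ℝ) (x : V) :
    0 ≤ gradLenM μ E w m ψ x := by
  unfold gradLenM
  split_ifs
  · exact Real.sqrt_nonneg _
  · exact abs_nonneg _

theorem abs_sub_le_of_abs_deriv_le_rpow_of_nonneg {g : ℝ → ℝ} (hg : Differentiable ℝ g)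
    {c₁ c₂ e : ℝ} (he : 0 ≤ e) (hbd : ∀ r, |deriv g r| ≤ c₁ * |r| ^ e + c₂) {s : ℝ} (hs : 0 ≤ s) :
    |g s - g 0| ≤ c₁ * s ^ (e + 1) / (e + 1) + c₂ * s := by
  have hB : ∀ r, HasDerivAt (fun r => c₁ * r ^ (e + 1) / (e + 1) + c₂ * r) (c₁ * r ^ e + c₂) r := by
    intro r
    refine ((((Real.hasDerivAt_rpow_const (Or.inr (by linarith))).const_mul c₁).div_const
      (e + 1)).add ((hasDerivAt_id' r).const_mul c₂)).congr_deriv ?_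
    rw [add_sub_cancel_right]
    field_simp
  refine image_norm_le_of_norm_deriv_right_le_deriv_boundary (f := fun r => g r - g 0)
    (hg.continuous.sub continuous_const).continuousOn
    (fun r _ => ((hg r).hasDerivAt.sub_const (g 0)).hasDerivWithinAt) ?_ hB ?_ ⟨hs, le_rfl⟩
  · simp [Real.zero_rpow (by linarith : e + 1 ≠ 0)]
  · intro r hr
    simpa [abs_of_nonneg hr.1] using hbd r

theorem abs_sub_le_of_abs_deriv_le_rpow {g : ℝ → ℝ} (hg : Differentiable ℝ g)
    {c₁ c₂ e : ℝ} (he : 0 ≤ e) (hbd : ∀ r, |deriv g r| ≤ c₁ * |r| ^ e + c₂) (s : ℝ) :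
    |g s - g 0| ≤ c₁ * |s| ^ (e + 1) / (e + 1) + c₂ * |s| := by
  rcases le_total 0 s with hs | hs
  · rw [abs_of_nonneg hs]
    exact abs_sub_le_of_abs_deriv_le_rpow_of_nonneg hg he hbd hs
  · have hbd' : ∀ r, |deriv (fun r => g (-r)) r| ≤ c₁ * |r| ^ e + c₂ := fun r => by
      simpa [deriv_comp_neg] using hbd (-r)
    simpa [abs_of_nonpos hs] using
      abs_sub_le_of_abs_deriv_le_rpow_of_nonneg (hg.comp differentiable_neg) he hbd'
        (neg_nonneg.2 hs)

theorem mul_rpow_le_young {p : ℝ} (hp : 1 < p) (q : ℝ) {a b : ℝ} (ha : 0 ≤ a) (hb : 0 ≤ b) :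
    a * b ^ ((p * q - q) / p) ≤ a ^ p / p + (p - 1) / p * b ^ q := by
  have hconj : p.HolderConjugate (p / (p - 1)) := .conjExponent hp
  have hexp : ((p * q - q) / p) * (p / (p - 1)) = q := by
    field_simp [(by linarith : p - 1 ≠ 0)]
  calc a * b ^ ((p * q - q) / p)
      ≤ a ^ p / p + (b ^ ((p * q - q) / p)) ^ (p / (p - 1)) / (p / (p - 1)) :=
        Real.young_inequality_of_nonneg ha (by positivity) hconj
    _ = a ^ p / p + (p - 1) / p * b ^ q := by
        rw [← Real.rpow_mul hb, hexp, div_div_eq_mul_div]; ring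

theorem le_apply_zero_add_rpow_of_abs_deriv_le {G : ℝ → ℝ → ℝ} {p q a₁ a₂ a₃ a₄ : ℝ}
    (hp : 1 < p) (hq : 1 < q) (ha₂ : 0 ≤ a₂)
    (hGs_diff : ∀ t, Differentiable ℝ (fun s => G s t)) (hGt_diff : Differentiable ℝ (G 0))
    (hGs : ∀ s t, |deriv (fun s' => G s' t) s| ≤
      a₁ * |s| ^ (p - 1) + a₂ * |t| ^ ((p * q - q) / p))
    (hGt : ∀ s t, |deriv (fun t' => G s t') t| ≤
      a₃ * |s| ^ ((p * q - p) / q) + a₄ * |t| ^ (q - 1)) (s t : ℝ) :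
    G s t ≤ G 0 0 + (a₁ + a₂) / p * |s| ^ p + ((p * q - q) / p * a₂ + a₄) / q * |t| ^ q := by
  have hs_step : |G s t - G 0 t| ≤ a₁ * |s| ^ p / p + a₂ * |t| ^ ((p * q - q) / p) * |s| := by
    simpa using abs_sub_le_of_abs_deriv_le_rpow (hGs_diff t) (by linarith) (fun r => hGs r t) s
  have ht_step : |G 0 t - G 0 0| ≤ a₄ * |t| ^ q / q := by
    have hbd : ∀ r, |deriv (G 0) r| ≤ a₄ * |r| ^ (q - 1) + 0 := fun r => by
      have hexp : (p * q - p) / q ≠ 0 := by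
        have : 0 < p * q - p := by nlinarith
        positivity
      simpa [Real.zero_rpow hexp] using hGt 0 r
    simpa using abs_sub_le_of_abs_deriv_le_rpow hGt_diff (by linarith) hbd t
  have hyoung :=
    mul_le_mul_of_nonneg_left (mul_rpow_le_young hp q (abs_nonneg s) (abs_nonneg t)) ha₂
  have hcoeff : ((p * q - q) / p * a₂ + a₄) / q = (p - 1) / p * a₂ + a₄ / q := by
    field_simp
  rw [hcoeff]
  linear_combination (le_abs_self (G s t - G 0 t)).trans hs_step +
    (le_abs_self (G 0 t - G 0 0)).trans ht_step + hyoung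

section SupBounds

variable {V : Type*} [Fintype V] [Nonempty V]

theorem le_sup'_abs (f : V → ℝ) (x : V) : f x ≤ univ.sup' univ_nonempty fun x => |f x| :=
  (le_abs_self _).trans (le_sup' (fun x => |f x|) (mem_univ x))

theorem sup'_abs_nonneg (f : V → ℝ) : 0 ≤ univ.sup' univ_nonempty fun x => |f x| :=
  (abs_nonneg _).trans (le_sup' (fun x => |f x|) (mem_univ (Classical.arbitrary V)))

theorem apply_le_apply_zero_add_sup'_rpow {F : V → ℝ → ℝ → ℝ} {f₁ f₂ f₃ f₄ : V → ℝ} {p q : ℝ}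
    (hp : 1 < p) (hq : 1 < q) (hF : ∀ x, ContDiff ℝ 1 (fun st : ℝ × ℝ => F x st.1 st.2))
    (hFs : ∀ x s t, |deriv (fun s' => F x s' t) s| ≤
      f₁ x * |s| ^ (p - 1) + f₂ x * |t| ^ ((p * q - q) / p))
    (hFt : ∀ x s t, |deriv (fun t' => F x s t') t| ≤
      f₃ x * |s| ^ ((p * q - p) / q) + f₄ x * |t| ^ (q - 1)) (x : V) (s t : ℝ) :
    F x s t ≤ F x 0 0 +
      ((univ.sup' univ_nonempty fun x => |f₁ x|) + univ.sup' univ_nonempty fun x => |f₂ x|) / p *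
        |s| ^ p +
      ((p * q - q) / p * (univ.sup' univ_nonempty fun x => |f₂ x|) +
        univ.sup' univ_nonempty fun x => |f₄ x|) / q * |t| ^ q := by
  have hdiff := (hF x).differentiable one_ne_zero
  refine le_apply_zero_add_rpow_of_abs_deriv_le (a₃ := f₃ x) hp hq (sup'_abs_nonneg f₂)
    (fun t => hdiff.comp (differentiable_id.prodMk (differentiable_const t)))
    (hdiff.comp ((differentiable_const 0).prodMk differentiable_id))
    (fun s t => (hFs x s t).trans ?_) (fun s t => (hFt x s t).trans ?_) s t
  · gcongr <;> exact le_sup'_abs _ x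
  · gcongr; exact le_sup'_abs _ x

end SupBounds

section Embedding

variable {V : Type*} [Fintype V] [Nonempty V] {μ h : V → ℝ}

/-- `K_l ^ l` in the notation of the paper; it does not depend on `l`. -/
noncomputable def embeddingConst (μ h : V → ℝ) : ℝ :=
  (∑ x, μ x) / (univ.inf' univ_nonempty μ * univ.inf' univ_nonempty h)

theorem inf'_pos {f : V → ℝ} (hf : ∀ x, 0 < f x) : 0 < univ.inf' univ_nonempty f :=
  (lt_inf'_iff _).2 fun x _ => hf x

theorem embeddingConst_pos (hμ : ∀ x, 0 < μ x) (hh : ∀ x, 0 < h x) : 0 < embeddingConst μ h :=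
  div_pos (sum_pos (fun x _ => hμ x) univ_nonempty) (mul_pos (inf'_pos hμ) (inf'_pos hh))

theorem embeddingConst_eq_rpow (hμ : ∀ x, 0 < μ x) (hh : ∀ x, 0 < h x) {l : ℝ} (hl : l ≠ 0) :
    embeddingConst μ h = ((∑ x, μ x) ^ (1 / l) /
      ((univ.inf' univ_nonempty μ) ^ (1 / l) * (univ.inf' univ_nonempty h) ^ (1 / l))) ^ l := by
  rw [← Real.mul_rpow (inf'_pos hμ).le (inf'_pos hh).le,
    ← Real.div_rpow (sum_nonneg fun x _ => (hμ x).le) (mul_pos (inf'_pos hμ) (inf'_pos hh)).le,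
    one_div, ← embeddingConst, Real.rpow_inv_rpow (embeddingConst_pos hμ hh).le hl]

theorem inv_inf'_le_embeddingConst (hμ : ∀ x, 0 < μ x) (hh : ∀ x, 0 < h x) :
    (univ.inf' univ_nonempty h)⁻¹ ≤ embeddingConst μ h := by
  obtain ⟨x₀⟩ := ‹Nonempty V›
  have hμmin_le : univ.inf' univ_nonempty μ ≤ ∑ x, μ x :=
    (inf'_le _ (mem_univ x₀)).trans (single_le_sum (fun x _ => (hμ x).le) (mem_univ x₀))
  rw [embeddingConst, show (univ.inf' univ_nonempty h)⁻¹ =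
    univ.inf' univ_nonempty μ / (univ.inf' univ_nonempty μ * univ.inf' univ_nonempty h) by
      field_simp [(inf'_pos hμ).ne']]
  gcongr
  exact (mul_pos (inf'_pos hμ) (inf'_pos hh)).le

theorem sum_mul_abs_rpow_le {g u : V → ℝ} {l : ℝ} (hμ : ∀ x, 0 < μ x) (hh : ∀ x, 0 < h x)
    (hg : ∀ x, 0 ≤ g x) :
    ∑ x, μ x * |u x| ^ l ≤ embeddingConst μ h * ∑ x, μ x * (g x + h x * |u x| ^ l) := by
  set hmin := univ.inf' univ_nonempty h
  have hhmin : 0 < hmin := inf'_pos hh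
  calc ∑ x, μ x * |u x| ^ l ≤ hmin⁻¹ * ∑ x, μ x * (g x + h x * |u x| ^ l) := by
        rw [mul_sum]
        refine sum_le_sum fun x _ => ?_
        rw [le_inv_mul_iff₀ hhmin, mul_left_comm]
        refine mul_le_mul_of_nonneg_left ?_ (hμ x).le
        exact (mul_le_mul_of_nonneg_right (inf'_le _ (mem_univ x)) (by positivity)).trans
          (le_add_of_nonneg_left (hg x))
    _ ≤ _ := by
        gcongr
        · exact sum_nonneg fun x _ => mul_nonneg (hμ x).le (add_nonneg (hg x)
            (mul_nonneg (hh x).le (by positivity)))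
        · exact inv_inf'_le_embeddingConst hμ hh

end Embedding

theorem sum_mul_apply_le {V : Type*} [Fintype V] {μ : V → ℝ} (hμ : ∀ x, 0 ≤ μ x)
    {F : V → ℝ → ℝ → ℝ} {p q a b : ℝ}
    (hF : ∀ x s t, F x s t ≤ F x 0 0 + a * |s| ^ p + b * |t| ^ q) (u v : V → ℝ) :
    ∑ x, μ x * F x (u x) (v x) ≤
      ∑ x, μ x * F x 0 0 + a * ∑ x, μ x * |u x| ^ p + b * ∑ x, μ x * |v x| ^ q := by
  rw [mul_sum, mul_sum, ← sum_add_distrib, ← sum_add_distrib]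
  gcongr with x
  linear_combination mul_le_mul_of_nonneg_left (hF x (u x) (v x)) (hμ x)

theorem sum_mul_add_mul_abs_rpow_nonneg {V : Type*} [Fintype V] {μ g h u : V → ℝ} {l : ℝ}
    (hμ : ∀ x, 0 ≤ μ x) (hg : ∀ x, 0 ≤ g x) (hh : ∀ x, 0 ≤ h x) :
    0 ≤ ∑ x, μ x * (g x + h x * |u x| ^ l) :=
  sum_nonneg fun x _ => mul_nonneg (hμ x) (add_nonneg (hg x) (mul_nonneg (hh x) (by positivity)))

theorem min_mul_add_sub_le_sub_sum_mul {V : Type*} [Fintype V] [Nonempty V]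
    {μ h₁ h₂ g₁ g₂ : V → ℝ} (hμ : ∀ x, 0 < μ x) (hh₁ : ∀ x, 0 < h₁ x) (hh₂ : ∀ x, 0 < h₂ x)
    (hg₁ : ∀ x, 0 ≤ g₁ x) (hg₂ : ∀ x, 0 ≤ g₂ x) {F : V → ℝ → ℝ → ℝ} {p q a b : ℝ}
    (ha : 0 ≤ a) (hb : 0 ≤ b) (hF : ∀ x s t, F x s t ≤ F x 0 0 + a * |s| ^ p + b * |t| ^ q)
    (u v : V → ℝ) :
    min (1 / p - a * embeddingConst μ h₁) (1 / q - b * embeddingConst μ h₂) *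
        (∑ x, μ x * (g₁ x + h₁ x * |u x| ^ p) + ∑ x, μ x * (g₂ x + h₂ x * |v x| ^ q)) -
        ∑ x, μ x * F x 0 0 ≤
      1 / p * ∑ x, μ x * (g₁ x + h₁ x * |u x| ^ p) +
        1 / q * ∑ x, μ x * (g₂ x + h₂ x * |v x| ^ q) - ∑ x, μ x * F x (u x) (v x) := by
  set N₁ := ∑ x, μ x * (g₁ x + h₁ x * |u x| ^ p)
  set N₂ := ∑ x, μ x * (g₂ x + h₂ x * |v x| ^ q)
  have hN₁ : 0 ≤ N₁ := sum_mul_add_mul_abs_rpow_nonneg (fun x => (hμ x).le) hg₁ fun x => (hh₁ x).le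
  have hN₂ : 0 ≤ N₂ := sum_mul_add_mul_abs_rpow_nonneg (fun x => (hμ x).le) hg₂ fun x => (hh₂ x).le
  have hsum := sum_mul_apply_le (fun x => (hμ x).le) hF u v
  have hu := mul_le_mul_of_nonneg_left (sum_mul_abs_rpow_le (u := u) (l := p) hμ hh₁ hg₁) ha
  have hv := mul_le_mul_of_nonneg_left (sum_mul_abs_rpow_le (u := v) (l := q) hμ hh₂ hg₂) hb
  have hmin₁ := mul_le_mul_of_nonneg_right (min_le_left (1 / p - a * embeddingConst μ h₁)
    (1 / q - b * embeddingConst μ h₂)) hN₁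
  have hmin₂ := mul_le_mul_of_nonneg_right (min_le_right (1 / p - a * embeddingConst μ h₁)
    (1 / q - b * embeddingConst μ h₂)) hN₂
  linear_combination hsum + hu + hv + hmin₁ + hmin₂

theorem rpow_one_div_le_one_add {a p : ℝ} (ha : 0 ≤ a) (hp : 1 ≤ p) : a ^ (1 / p) ≤ 1 + a := by
  have hexp : 1 / p ≤ 1 := (div_le_one (by linarith)).2 hp
  rcases le_total a 1 with ha1 | ha1
  · linarith [Real.rpow_le_one ha ha1 (by positivity : 0 ≤ 1 / p)]
  · linarith [Real.rpow_le_self_of_one_le ha1 hexp]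

theorem div_mul_lt_one_div {a K p : ℝ} (hp : 0 < p) (h : a * K < 1) : a / p * K < 1 / p := by
  rw [div_mul_eq_mul_div]
  exact div_lt_div_of_pos_right h hp

theorem coercive_of_sub_le {X Y : Type*} {N₁ : X → ℝ} {N₂ : Y → ℝ} {Φ : X → Y → ℝ}
    {p q ε C : ℝ} (hp : 1 ≤ p) (hq : 1 ≤ q) (hε : 0 < ε)
    (hN₁ : ∀ x, 0 ≤ N₁ x) (hN₂ : ∀ y, 0 ≤ N₂ y)
    (hΦ : ∀ x y, ε * (N₁ x + N₂ y) - C ≤ Φ x y) :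
    ∀ M, ∃ R, ∀ x y, R ≤ N₁ x ^ (1 / p) + N₂ y ^ (1 / q) → M ≤ Φ x y := by
  intro M
  refine ⟨(M + C) / ε + 2, fun x y hR => ?_⟩
  have hN : (M + C) / ε ≤ N₁ x + N₂ y := by
    linarith [rpow_one_div_le_one_add (hN₁ x) hp, rpow_one_div_le_one_add (hN₂ y) hq]
  linarith [hΦ x y, (div_le_iff₀' hε).1 hN]

theorem energy_coercive_general {V : Type*} [Fintype V] [Nonempty V] (μ : V → ℝ) (E : V → V → Prop)
    [DecidableRel E] (w : V → V → ℝ)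
    (hμ : ∀ x, 0 < μ x)
    (p q : ℝ) (hp : 1 < p) (hq : 1 < q)
    (m₁ m₂ : ℕ)
    (h₁ h₂ : V → ℝ) (hh₁ : ∀ x, 0 < h₁ x) (hh₂ : ∀ x, 0 < h₂ x)
    -- (A): F(x,·,·) is C¹
    (F : V → ℝ → ℝ → ℝ)
    (hF : ∀ x, ContDiff ℝ 1 (fun st : ℝ × ℝ => F x st.1 st.2))
    -- (H₁)
    (f₁ f₂ f₃ f₄ : V → ℝ)
    (hFs : ∀ x s t, |deriv (fun s' => F x s' t) s| ≤
      f₁ x * |s| ^ (p - 1) + f₂ x * |t| ^ ((p * q - q) / p))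
    (hFt : ∀ x s t, |deriv (fun t' => F x s t') t| ≤
      f₃ x * |s| ^ ((p * q - p) / q) + f₄ x * |t| ^ (q - 1))
    (hKq : (p * q - q) / p * (univ.sup' univ_nonempty fun x => |f₂ x|) +
        (univ.sup' univ_nonempty fun x => |f₄ x|) <
        1 / ((∑ x, μ x) ^ (1 / q) /
          ((univ.inf' univ_nonempty μ) ^ (1 / q) * (univ.inf' univ_nonempty h₂) ^ (1 / q))) ^ q)
    (hKp : (univ.sup' univ_nonempty fun x => |f₁ x|) +
        (univ.sup' univ_nonempty fun x => |f₂ x|) <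
        1 / ((∑ x, μ x) ^ (1 / p) /
          ((univ.inf' univ_nonempty μ) ^ (1 / p) * (univ.inf' univ_nonempty h₁) ^ (1 / p))) ^ p) :
    ∀ M : ℝ, ∃ R : ℝ, ∀ u v : V → ℝ,
      R ≤ sobNorm μ E w m₁ p h₁ u + sobNorm μ E w m₂ q h₂ v →
      M ≤ (1 / p) * (∑ x, μ x * ((gradLenM μ E w m₁ u x) ^ p + h₁ x * |u x| ^ p)) +
          (1 / q) * (∑ x, μ x * ((gradLenM μ E w m₂ v x) ^ q + h₂ x * |v x| ^ q)) -
          ∑ x, μ x * F x (u x) (v x) := by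
  have hp0 : 0 < p := by linarith
  have hq0 : 0 < q := by linarith
  have hA₁ := sup'_abs_nonneg f₁
  have hA₂ := sup'_abs_nonneg f₂
  have hA₄ := sup'_abs_nonneg f₄
  have hqp : 0 ≤ (p * q - q) / p := div_nonneg (by nlinarith) hp0.le
  rw [← embeddingConst_eq_rpow hμ hh₁ hp0.ne', lt_div_iff₀ (embeddingConst_pos hμ hh₁)] at hKp
  rw [← embeddingConst_eq_rpow hμ hh₂ hq0.ne', lt_div_iff₀ (embeddingConst_pos hμ hh₂)] at hKq
  have hε :=
    lt_min (sub_pos.2 (div_mul_lt_one_div hp0 hKp)) (sub_pos.2 (div_mul_lt_one_div hq0 hKq))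
  have hgrad : ∀ m (l : ℝ) (u : V → ℝ) x, 0 ≤ gradLenM μ E w m u x ^ l :=
    fun m l u x => Real.rpow_nonneg (gradLenM_nonneg μ E w m u x) l
  refine coercive_of_sub_le
    (N₁ := fun u => ∑ x, μ x * (gradLenM μ E w m₁ u x ^ p + h₁ x * |u x| ^ p))
    (N₂ := fun v => ∑ x, μ x * (gradLenM μ E w m₂ v x ^ q + h₂ x * |v x| ^ q)) hp.le hq.le hε
    (fun u => sum_mul_add_mul_abs_rpow_nonneg (hμ · |>.le) (hgrad m₁ p u) (hh₁ · |>.le))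
    (fun v => sum_mul_add_mul_abs_rpow_nonneg (hμ · |>.le) (hgrad m₂ q v) (hh₂ · |>.le))
    (fun u v => min_mul_add_sub_le_sub_sum_mul hμ hh₁ hh₂ (hgrad m₁ p u) (hgrad m₂ q v)
      (by positivity) (by positivity) (apply_le_apply_zero_add_sup'_rpow hp hq hF hFs hFt) u v)

/-- Coercivity (Lemma 3.1): under (A) and (H₁), the energy functional
`φ_V(u,v) = (1/p)‖u‖^p + (1/q)‖v‖^q − ∫_V F(x,u,v) dμ` is coercive on
`X = W^{m₁,p}(V) × W^{m₂,q}(V)`. -/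
theorem energy_coercive {V : Type*} [Fintype V] [Nonempty V] (μ : V → ℝ) (E : V → V → Prop)
    [DecidableRel E] (w : V → V → ℝ)
    (hμ : ∀ x, 0 < μ x)
    (hE : ∀ x y, E x y ↔ E y x)
    (hw : ∀ x y, E x y → 0 < w x y)
    (hws : ∀ x y, w x y = w y x)
    (p q : ℝ) (hp : 1 < p) (hq : 1 < q)
    (m₁ m₂ : ℕ) (hm₁ : 1 ≤ m₁) (hm₂ : 1 ≤ m₂)
    (h₁ h₂ : V → ℝ) (hh₁ : ∀ x, 0 < h₁ x) (hh₂ : ∀ x, 0 < h₂ x)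
    -- (A): F(x,·,·) is C¹
    (F : V → ℝ → ℝ → ℝ)
    (hF : ∀ x, ContDiff ℝ 1 (fun st : ℝ × ℝ => F x st.1 st.2))
    -- (H₁)
    (f₁ f₂ f₃ f₄ : V → ℝ)
    (hf₁ : ∀ x, 0 ≤ f₁ x) (hf₂ : ∀ x, 0 ≤ f₂ x) (hf₃ : ∀ x, 0 ≤ f₃ x) (hf₄ : ∀ x, 0 ≤ f₄ x)
    (h0 : ∑ x, μ x * F x 0 0 = 0)
    (hFs : ∀ x s t, |deriv (fun s' => F x s' t) s| ≤
      f₁ x * |s| ^ (p - 1) + f₂ x * |t| ^ ((p * q - q) / p))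
    (hFt : ∀ x s t, |deriv (fun t' => F x s t') t| ≤
      f₃ x * |s| ^ ((p * q - p) / q) + f₄ x * |t| ^ (q - 1))
    (hKq : (p * q - q) / p * (univ.sup' univ_nonempty fun x => |f₂ x|) +
        (univ.sup' univ_nonempty fun x => |f₄ x|) <
        1 / ((∑ x, μ x) ^ (1 / q) /
          ((univ.inf' univ_nonempty μ) ^ (1 / q) * (univ.inf' univ_nonempty h₂) ^ (1 / q))) ^ q)
    (hKp : (univ.sup' univ_nonempty fun x => |f₁ x|) +
        (univ.sup' univ_nonempty fun x => |f₂ x|) <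
        1 / ((∑ x, μ x) ^ (1 / p) /
          ((univ.inf' univ_nonempty μ) ^ (1 / p) * (univ.inf' univ_nonempty h₁) ^ (1 / p))) ^ p) :
    ∀ M : ℝ, ∃ R : ℝ, ∀ u v : V → ℝ,
      R ≤ sobNorm μ E w m₁ p h₁ u + sobNorm μ E w m₂ q h₂ v →
      M ≤ (1 / p) * (∑ x, μ x * ((gradLenM μ E w m₁ u x) ^ p + h₁ x * |u x| ^ p)) +
          (1 / q) * (∑ x, μ x * ((gradLenM μ E w m₂ v x) ^ q + h₂ x * |v x| ^ q)) -
          ∑ x, μ x * F x (u x) (v x) :=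
  energy_coercive_general μ E w hμ p q hp hq m₁ m₂ h₁ h₂ hh₁ hh₂ F hF f₁ f₂ f₃ f₄ hFs hFt hKq hKp
end

section
/- (Divergence to −∞ along constants) Suppose (H₂)-first part holds: limsup_{R→∞} inf_{|(a,b)|=R} (∫_V F(x,a,b)dμ)/(|a|^p + |b|^q) > max{(1/p)∫_V h₁dμ, (1/q)∫_V h₂dμ}. Then there exists a sequence R_n → +∞ with sup_{(a,b)∈ℝ², |(a,b)|=R_n} φ_V(a,b) → −∞. -/
open Finset Filter

/-!
On the circle of radius `R ≥ √2` the larger of `|a|, |b|` is at least `R / √2 ≥ 1`, so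
`|a| ^ p + |b| ^ q ≥ R / √2` once `p, q ≥ 1`. Along radii where (H₂) gives
`∑ μ F ≥ α (|a| ^ p + |b| ^ q)`, this yields
`φ_V(a, b) ≤ -(α - β) (|a| ^ p + |b| ^ q) ≤ -(α - β) R / √2`, with `β` the maximum in (H₂).
-/

lemma div_sqrt_two_le_abs_of_sq_le {a b : ℝ} (hba : b ^ 2 ≤ a ^ 2) :
    √(a ^ 2 + b ^ 2) / √2 ≤ |a| := by
  rw [div_le_iff₀ (by positivity), ← Real.sqrt_sq_eq_abs, ← Real.sqrt_mul (sq_nonneg a)]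
  exact Real.sqrt_le_sqrt (by linarith)

lemma div_sqrt_two_le_rpow_add_rpow {a b p q : ℝ} (hp : 1 ≤ p) (hq : 1 ≤ q)
    (hR : √2 ≤ √(a ^ 2 + b ^ 2)) :
    √(a ^ 2 + b ^ 2) / √2 ≤ |a| ^ p + |b| ^ q := by
  have hone : 1 ≤ √(a ^ 2 + b ^ 2) / √2 := by rwa [one_le_div₀ (by positivity)]
  rcases le_total (b ^ 2) (a ^ 2) with hba | hab
  · have ha := div_sqrt_two_le_abs_of_sq_le hba
    have := Real.self_le_rpow_of_one_le (hone.trans ha) hp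
    have := Real.rpow_nonneg (abs_nonneg b) q
    linarith
  · have hb := div_sqrt_two_le_abs_of_sq_le hab
    rw [add_comm (b ^ 2)] at hb
    have := Real.self_le_rpow_of_one_le (hone.trans hb) hq
    have := Real.rpow_nonneg (abs_nonneg a) p
    linarith

lemma sub_le_neg_mul_of_le_of_le {u v A B S p q α β : ℝ} (hu : 0 ≤ u) (hv : 0 ≤ v)
    (hA : 1 / p * A ≤ β) (hB : 1 / q * B ≤ β) (hS : α * (u + v) ≤ S) :
    u / p * A + v / q * B - S ≤ -((α - β) * (u + v)) := by
  have hAu : u / p * A ≤ β * u := by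
    rw [show u / p * A = 1 / p * A * u by ring]; exact mul_le_mul_of_nonneg_right hA hu
  have hBv : v / q * B ≤ β * v := by
    rw [show v / q * B = 1 / q * B * v by ring]; exact mul_le_mul_of_nonneg_right hB hv
  linarith

theorem sup_on_spheres_to_neg_infty_general {V : Type*} [Fintype V] (μ : V → ℝ)
    (p q : ℝ) (hp : 1 < p) (hq : 1 < q)
    (h₁ h₂ : V → ℝ)
    (F : V → ℝ → ℝ → ℝ)
    -- (H₂), first part: the limsup of the infimum over spheres exceeds the max
    (hH₂ : ∃ α : ℝ,
      max ((1 / p) * ∑ x, μ x * h₁ x) ((1 / q) * ∑ x, μ x * h₂ x) < α ∧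
      ∀ R₀ : ℝ, 0 < R₀ → ∃ R : ℝ, R₀ ≤ R ∧ ∀ a b : ℝ,
        Real.sqrt (a ^ 2 + b ^ 2) = R →
        α * (|a| ^ p + |b| ^ q) ≤ ∑ x, μ x * F x a b) :
    ∃ Rn : ℕ → ℝ,
      Tendsto Rn atTop atTop ∧
      Tendsto (fun n => sSup {y : ℝ | ∃ a b : ℝ, Real.sqrt (a ^ 2 + b ^ 2) = Rn n ∧
          y = |a| ^ p / p * (∑ x, μ x * h₁ x) + |b| ^ q / q * (∑ x, μ x * h₂ x) -
              ∑ x, μ x * F x a b}) atTop atBot := by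
  obtain ⟨α, hα, hgood⟩ := hH₂
  set β := max ((1 / p) * ∑ x, μ x * h₁ x) ((1 / q) * ∑ x, μ x * h₂ x)
  have hfreq : ∃ᶠ R in atTop, ∀ a b : ℝ, √(a ^ 2 + b ^ 2) = R →
      α * (|a| ^ p + |b| ^ q) ≤ ∑ x, μ x * F x a b :=
    frequently_atTop.2 fun R₀ =>
      (hgood (max R₀ 1) (by positivity)).imp fun _ hR => ⟨le_of_max_le_left hR.1, hR.2⟩
  obtain ⟨Rn, hRn, hRn_good⟩ :=
    exists_seq_forall_of_frequently (hfreq.and_eventually (eventually_ge_atTop √2))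
  refine ⟨Rn, hRn, ?_⟩
  have hbound : Tendsto (fun n => -((α - β) * (Rn n / √2))) atTop atBot :=
    tendsto_neg_atTop_atBot.comp
      ((hRn.atTop_div_const (by positivity)).const_mul_atTop (sub_pos.2 hα))
  refine tendsto_atBot_mono (fun n => csSup_le ⟨_, Rn n, 0, ?_, rfl⟩ ?_) hbound
  · simp [Real.sqrt_sq ((Real.sqrt_nonneg 2).trans (hRn_good n).2)]
  · rintro y ⟨a, b, hab, rfl⟩
    have hsphere := div_sqrt_two_le_rpow_add_rpow hp.le hq.le (hab ▸ (hRn_good n).2)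
    rw [hab] at hsphere
    refine (sub_le_neg_mul_of_le_of_le (Real.rpow_nonneg (abs_nonneg a) p)
      (Real.rpow_nonneg (abs_nonneg b) q) (le_max_left _ _) (le_max_right _ _)
      ((hRn_good n).1 a b hab)).trans ?_
    exact neg_le_neg (mul_le_mul_of_nonneg_left hsphere (sub_pos.2 hα).le)

/-- Divergence to −∞ along constants (Lemma 3.2): if
`limsup_{R→∞} inf_{|(a,b)|=R} (∫_V F(x,a,b)dμ)/(|a|^p+|b|^q) >
 max{(1/p)∫_V h₁dμ, (1/q)∫_V h₂dμ}`, then there is a sequence `R_n → +∞` with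
`sup_{|(a,b)|=R_n} φ_V(a,b) → −∞`, where
`φ_V(a,b) = (|a|^p/p)∫_V h₁dμ + (|b|^q/q)∫_V h₂dμ − ∫_V F(x,a,b)dμ`. -/
theorem sup_on_spheres_to_neg_infty {V : Type*} [Fintype V] (μ : V → ℝ)
    (hμ : ∀ x, 0 < μ x)
    (p q : ℝ) (hp : 1 < p) (hq : 1 < q)
    (h₁ h₂ : V → ℝ) (hh₁ : ∀ x, 0 < h₁ x) (hh₂ : ∀ x, 0 < h₂ x)
    (F : V → ℝ → ℝ → ℝ)
    (hFc : ∀ x, Continuous (fun ab : ℝ × ℝ => F x ab.1 ab.2))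
    -- (H₂), first part: the limsup of the infimum over spheres exceeds the max
    (hH₂ : ∃ α : ℝ,
      max ((1 / p) * ∑ x, μ x * h₁ x) ((1 / q) * ∑ x, μ x * h₂ x) < α ∧
      ∀ R₀ : ℝ, 0 < R₀ → ∃ R : ℝ, R₀ ≤ R ∧ ∀ a b : ℝ,
        Real.sqrt (a ^ 2 + b ^ 2) = R →
        α * (|a| ^ p + |b| ^ q) ≤ ∑ x, μ x * F x a b) :
    ∃ Rn : ℕ → ℝ,
      Tendsto Rn atTop atTop ∧
      Tendsto (fun n => sSup {y : ℝ | ∃ a b : ℝ, Real.sqrt (a ^ 2 + b ^ 2) = Rn n ∧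
          y = |a| ^ p / p * (∑ x, μ x * h₁ x) + |b| ^ q / q * (∑ x, μ x * h₂ x) -
              ∑ x, μ x * F x a b}) atTop atBot :=
  sup_on_spheres_to_neg_infty_general μ p q hp hq h₁ h₂ F hH₂
end
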